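/- Let (A, ⟨⟨-,-⟩⟩, μ) be a double Hamiltonian algebra over A₀ and let φ be a bracket-compatible involutive anti-automorphism of A. Then for all b ∈ A and s ∈ I one has ⟨⟨φ(μ_s), b⟩⟩ = e_s ⊗ e_s b − b e_s ⊗ e_s = −⟨⟨μ_s, b⟩⟩; consequently −φ(μ) = −Σ_s φ(μ_s) is again a moment map for (A, ⟨⟨-,-⟩⟩). -/
import Mathlib


open TensorProduct

noncomputable section

namespace Stmt5

variable {A : Type*} [Ring A] [Algebra ℂ A]

/-- The flip `(c ⊗ d)^∘ = d ⊗ c` on `A ⊗[ℂ] A`. -/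
def flipT : A ⊗[ℂ] A →ₗ[ℂ] A ⊗[ℂ] A := (TensorProduct.comm ℂ A A).toLinearMap

/-- The outer bimodule structure `a ⬝ (d' ⊗ d'') ⬝ b = (a d') ⊗ (d'' b)`. -/
def outerAct (a b : A) : A ⊗[ℂ] A →ₗ[ℂ] A ⊗[ℂ] A :=
  TensorProduct.map (LinearMap.mulLeft ℂ a) (LinearMap.mulRight ℂ b)

/-- The inner bimodule structure `a ∗ (d' ⊗ d'') ∗ b = (d' b) ⊗ (a d'')`. -/
def innerAct (a b : A) : A ⊗[ℂ] A →ₗ[ℂ] A ⊗[ℂ] A :=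
  TensorProduct.map (LinearMap.mulRight ℂ b) (LinearMap.mulLeft ℂ a)

/-- Axioms of a double bracket on `A`. -/
structure IsDoubleBracket (br : A →ₗ[ℂ] A →ₗ[ℂ] A ⊗[ℂ] A) : Prop where
  cyclic : ∀ a b : A, br a b = - flipT (br b a)
  right_der : ∀ a b c : A, br a (b * c) = outerAct 1 c (br a b) + outerAct b 1 (br a c)
  left_der : ∀ a b c : A, br (b * c) a = innerAct 1 c (br b a) + innerAct b 1 (br c a)

/-- `τ₍₁₂₃₎ : (a₁ ⊗ a₂) ⊗ a₃ ↦ (a₃ ⊗ a₁) ⊗ a₂`. -/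
def cyc3 : (A ⊗[ℂ] A) ⊗[ℂ] A →ₗ[ℂ] (A ⊗[ℂ] A) ⊗[ℂ] A :=
  ((TensorProduct.comm ℂ (A ⊗[ℂ] A) A).trans (TensorProduct.assoc ℂ A A A).symm).toLinearMap

/-- The left extension of a double bracket. -/
def brL (br : A →ₗ[ℂ] A →ₗ[ℂ] A ⊗[ℂ] A) (a : A) :
    A ⊗[ℂ] A →ₗ[ℂ] (A ⊗[ℂ] A) ⊗[ℂ] A :=
  TensorProduct.map (br a) LinearMap.id

/-- The double Jacobiator of a double bracket. -/
def tripleBr (br : A →ₗ[ℂ] A →ₗ[ℂ] A ⊗[ℂ] A) (a b c : A) : (A ⊗[ℂ] A) ⊗[ℂ] A :=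
  brL br a (br b c) + cyc3 (brL br b (br c a)) + cyc3 (cyc3 (brL br c (br a b)))

/-- The double bracket is Poisson: the double Jacobiator vanishes identically. -/
def IsPoisson (br : A →ₗ[ℂ] A →ₗ[ℂ] A ⊗[ℂ] A) : Prop :=
  ∀ a b c : A, tripleBr br a b c = 0

variable {I : Type*} [Fintype I] [DecidableEq I]

/-- `(e s)` is a complete family of orthogonal idempotents. -/
def IsCompleteOrthIdem (e : I → A) : Prop :=
  (∀ s t : I, e s * e t = if s = t then e s else 0) ∧ (∑ s, e s = 1)

/-- `A₀`-linearity of a double bracket. -/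
def IsA0Linear (br : A →ₗ[ℂ] A →ₗ[ℂ] A ⊗[ℂ] A) (e : I → A) : Prop :=
  ∀ (s : I) (a : A), br (e s) a = 0 ∧ br a (e s) = 0

/-- `μ` is a moment map for the double Poisson bracket. -/
def IsMomentMap (br : A →ₗ[ℂ] A →ₗ[ℂ] A ⊗[ℂ] A) (e : I → A) (μ : A) : Prop :=
  (μ = ∑ s, e s * μ * e s) ∧
  ∀ (s : I) (a : A),
    br (e s * μ * e s) a = (a * e s) ⊗ₜ[ℂ] e s - e s ⊗ₜ[ℂ] (e s * a)

/-- `Φ` is a (multiplicative) moment map for the double quasi-Poisson bracket. -/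
def IsQuasiMomentMap (br : A →ₗ[ℂ] A →ₗ[ℂ] A ⊗[ℂ] A) (e : I → A) (Φ : A) : Prop :=
  IsUnit Φ ∧ (Φ = ∑ s, e s * Φ * e s) ∧
  ∀ (s : I) (a : A),
    br (e s * Φ * e s) a = (2 : ℂ)⁻¹ • (
      (a * e s) ⊗ₜ[ℂ] (e s * Φ * e s) - e s ⊗ₜ[ℂ] (e s * Φ * e s * a)
      + (a * (e s * Φ * e s)) ⊗ₜ[ℂ] e s - (e s * Φ * e s) ⊗ₜ[ℂ] (e s * a))

/-- `φ` is an involutive anti-automorphism of `A` fixing the idempotents. -/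
def IsAntiInvolution (e : I → A) (φ : A →ₗ[ℂ] A) : Prop :=
  (∀ a b : A, φ (a * b) = φ b * φ a) ∧ (∀ a : A, φ (φ a) = a) ∧ (∀ s : I, φ (e s) = e s)

/-- Bracket-compatibility: `(φ ⊗ φ)(⟨⟨a,b⟩⟩) = ⟨⟨φ(a),φ(b)⟩⟩^∘`. -/
def IsBracketCompat (br : A →ₗ[ℂ] A →ₗ[ℂ] A ⊗[ℂ] A) (φ : A →ₗ[ℂ] A) : Prop :=
  ∀ a b : A, TensorProduct.map φ φ (br a b) = flipT (br (φ a) (φ b))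

/-- If `(A, ⟨⟨-,-⟩⟩, μ)` is a double Hamiltonian algebra over `A₀` with
bracket-compatible involutive anti-automorphism `φ`, then
`⟨⟨φ(μₛ), b⟩⟩ = eₛ ⊗ eₛ b − b eₛ ⊗ eₛ = −⟨⟨μₛ, b⟩⟩`, and `−φ(μ)` is again a moment map. -/
theorem minus_phi_mu_moment_map
    (e : I → A) (he : IsCompleteOrthIdem e)
    (br : A →ₗ[ℂ] A →ₗ[ℂ] A ⊗[ℂ] A)
    (hbr : IsDoubleBracket br) (hlin : IsA0Linear br e) (hP : IsPoisson br)
    (μ : A) (hμ : IsMomentMap br e μ)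
    (φ : A →ₗ[ℂ] A) (hφ : IsAntiInvolution e φ) (hcomp : IsBracketCompat br φ) :
    (∀ (s : I) (b : A),
      br (φ (e s * μ * e s)) b = e s ⊗ₜ[ℂ] (e s * b) - (b * e s) ⊗ₜ[ℂ] e s ∧
      br (φ (e s * μ * e s)) b = - br (e s * μ * e s) b) ∧
    IsMomentMap br e (-(φ μ)) := by
  obtain ⟨horth, hsum⟩ := he
  obtain ⟨hanti, hinv, hfix⟩ := hφ
  obtain ⟨hμsum, hμbr⟩ := hμ
  have hflip2 : ∀ x : A ⊗[ℂ] A, flipT (flipT x) = x := by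
    intro x
    induction x using TensorProduct.induction_on with
    | zero => simp
    | tmul a b => simp [flipT]
    | add x y hx hy => simp only [map_add, hx, hy]
  have key : ∀ (s : I) (b : A),
      br (φ (e s * μ * e s)) b = e s ⊗ₜ[ℂ] (e s * b) - (b * e s) ⊗ₜ[ℂ] e s := by
    intro s b
    have h1 := hcomp (e s * μ * e s) (φ b)
    rw [hμbr s (φ b), hinv b] at h1
    have h2 : TensorProduct.map φ φ ((φ b * e s) ⊗ₜ[ℂ] e s - e s ⊗ₜ[ℂ] (e s * φ b))
        = (e s * b) ⊗ₜ[ℂ] e s - e s ⊗ₜ[ℂ] (b * e s) := by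
      simp [map_sub, TensorProduct.map_tmul, hanti, hfix, hinv]
    rw [h2] at h1
    rw [← hflip2 (br (φ (e s * μ * e s)) b), ← h1]
    simp [flipT, map_sub]
  have hφμs : ∀ s, φ (e s * μ * e s) = e s * φ μ * e s := by
    intro s
    rw [hanti, hanti, hfix, mul_assoc]
  have hφsum : φ μ = ∑ s, e s * φ μ * e s := by
    conv_lhs => rw [hμsum, map_sum]
    exact Finset.sum_congr rfl fun s _ => hφμs s
  refine ⟨fun s b => ⟨key s b, ?_⟩, ?_, ?_⟩
  · rw [key s b, hμbr s b]; abel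
  · rw [neg_eq_iff_eq_neg, ← Finset.sum_neg_distrib]
    conv_lhs => rw [hφsum]
    exact Finset.sum_congr rfl fun s _ => by simp [mul_neg, neg_mul]
  · intro s a
    have h : e s * -(φ μ) * e s = -(φ (e s * μ * e s)) := by
      rw [hφμs]; simp [mul_neg, neg_mul]
    rw [h, map_neg, LinearMap.neg_apply, key]
    abel


end Stmt5
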